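/- Let (x_i, y_i) ∈ ℝ² × ℝ², i = 1,…,m, be given. The following are equivalent: (1) there exist finite non-coincident cameras P₁ = (I 0) and P₂, and points w_i ∈ ℝ³, such that (P₁, P₂, {ŵ_i}) is a reconstruction of {(x_i,y_i)}; (2) there exists a fundamental matrix F associated to {(x_i,y_i)} and a nonzero vector e₂ ∈ ker(Fᵀ) such that (x_i,y_i) is ([e₂]_× F, e₂)-regular for all i = 1,…,m. -/

import Mathlib

open Matrix

noncomputable section

/-- For `u ∈ ℝⁿ`, `hat u = (u, 1)ᵀ ∈ ℝⁿ⁺¹`. -/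
def hat {n : ℕ} (u : Fin n → ℝ) : Fin (n + 1) → ℝ := Fin.snoc u 1

/-- The 3×4 matrix `(A b)` with left 3×3 block `A` and last column `b`. -/
def cam (A : Matrix (Fin 3) (Fin 3) ℝ) (b : Fin 3 → ℝ) : Matrix (Fin 3) (Fin 4) ℝ :=
  Matrix.of fun i => Fin.snoc (A i) (b i)

/-- The left 3×3 block of a 3×4 matrix. -/
def leftBlock (P : Matrix (Fin 3) (Fin 4) ℝ) : Matrix (Fin 3) (Fin 3) ℝ :=
  P.submatrix id Fin.castSucc

/-- A (projective) camera is a real 3×4 matrix of rank 3. -/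
def IsCamera (P : Matrix (Fin 3) (Fin 4) ℝ) : Prop := P.rank = 3

/-- A finite camera: the left 3×3 block is nonsingular. -/
def IsFiniteCamera (P : Matrix (Fin 3) (Fin 4) ℝ) : Prop := IsUnit (leftBlock P).det

/-- Two cameras are coincident if their camera centers agree up to a nonzero scale;
for rank-3 cameras the center is the (one-dimensional) kernel, so this says the two
cameras share a common nonzero kernel vector. -/
def Coincident (P Q : Matrix (Fin 3) (Fin 4) ℝ) : Prop :=
  ∃ c : Fin 4 → ℝ, c ≠ 0 ∧ P.mulVec c = 0 ∧ Q.mulVec c = 0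

/-- `u` is a nonzero scalar multiple of `v`. -/
def SimEq {n : ℕ} (u v : Fin n → ℝ) : Prop := ∃ c : ℝ, c ≠ 0 ∧ u = c • v

/-- The skew-symmetric matrix `[v]ₓ` with `[v]ₓ w = v × w`. -/
def skew (v : Fin 3 → ℝ) : Matrix (Fin 3) (Fin 3) ℝ :=
  !![0, -v 2, v 1; v 2, 0, -v 0; -v 1, v 0, 0]

/-- `(x, y)` is `(A, b)`-irregular. -/
def Irregular (A : Matrix (Fin 3) (Fin 3) ℝ) (b : Fin 3 → ℝ) (x y : Fin 2 → ℝ) : Prop :=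
  ((skew b * A).mulVec (hat x) = 0 ∧ Matrix.vecMul (hat y) (skew b) ≠ 0) ∨
  ((skew b * A).mulVec (hat x) ≠ 0 ∧ Matrix.vecMul (hat y) (skew b) = 0)

/-!
A reconstruction with depths `α, β ≠ 0` is the same as `α A x̂ + b = β ŷ`. Crossing with `b` gives
`α (b × A x̂) = β (b × ŷ)`, so `F = [b]ₓ A` and `e₂ = b` satisfy the epipolar constraint, and
`F x̂ = 0` exactly when `ŷ ∥ b`; this is regularity, because `[b]ₓ [b]ₓ F x̂ = -|b|² F x̂`.

Conversely put `A = [e₂]ₓ F + e₂ vᵀ`, so that `A x̂ = e₂ × u + (v · x̂) e₂` with `u = F x̂`. Both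
`e₂` and `ŷ` are orthogonal to `u`, so `ŷ` lies in the plane spanned by `e₂` and `e₂ × u`, and the
depths can be solved for unless `v · x̂` takes one bad value. `A` is invertible as soon as `v` is
not orthogonal to `ker F`. Finitely many affine hyperplanes cannot cover `ℝ³`, so some `v` avoids
all the bad conditions.
-/

lemma cross_eq_zero_iff {K : Type*} [Field K] {v w : Fin 3 → K} (hv : v ≠ 0) :
    v ⨯₃ w = 0 ↔ ∃ μ : K, w = μ • v := by
  rw [← not_iff_not, ← ne_eq, crossProduct_ne_zero_iff_linearIndependent,
    LinearIndependent.pair_iff' hv]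
  simp [eq_comm]

lemma cross_cross_self_eq_zero_iff {K : Type*} [Field K] [LinearOrder K] [IsStrictOrderedRing K]
    {e u : Fin 3 → K} (he : e ≠ 0) (heu : e ⬝ᵥ u = 0) : e ⨯₃ (e ⨯₃ u) = 0 ↔ u = 0 := by
  rw [cross_cross_eq_smul_sub_smul', heu, zero_smul, zero_sub, neg_eq_zero,
    smul_eq_zero_iff_right (dotProduct_self_eq_zero.not.mpr he)]

/-- The expansion of `w ∈ u⊥` in the orthogonal basis `e`, `e ⨯₃ u` of `u⊥`, with the
denominators cleared. -/
lemma smul_eq_add_cross_of_dotProduct_eq_zero {R : Type*} [CommRing R] {e u w : Fin 3 → R}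
    (heu : e ⬝ᵥ u = 0) (hwu : w ⬝ᵥ u = 0) :
    ((e ⬝ᵥ e) * (u ⬝ᵥ u)) • w = ((w ⬝ᵥ e) * (u ⬝ᵥ u)) • e + (w ⬝ᵥ e ⨯₃ u) • (e ⨯₃ u) := by
  ext i
  linear_combination (norm := skip) (e ⬝ᵥ e) * u i * hwu +
    ((e ⬝ᵥ u) * w i - (u ⬝ᵥ w) * e i - (e ⬝ᵥ w) * u i) * heu
  fin_cases i <;> simp [cross_apply, dotProduct, Fin.sum_univ_three] <;> ring

lemma exists_depths_of_cross_ne_zero {K : Type*} [Field K] [LinearOrder K] [IsStrictOrderedRing K]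
    {e u y : Fin 3 → K} {V : K} (he : e ≠ 0) (hu : u ≠ 0)
    (heu : e ⬝ᵥ u = 0) (hyu : y ⬝ᵥ u = 0) (hye : y ⨯₃ e ≠ 0)
    (hV : V ≠ (y ⬝ᵥ e) * (u ⬝ᵥ u) / (y ⬝ᵥ e ⨯₃ u)) :
    ∃ α β : K, α ≠ 0 ∧ β ≠ 0 ∧ α • (e ⨯₃ u + V • e) + e = β • y := by
  set k := (e ⬝ᵥ e) * (u ⬝ᵥ u)
  set s := (y ⬝ᵥ e) * (u ⬝ᵥ u)
  set c := y ⬝ᵥ e ⨯₃ u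
  have hk : k ≠ 0 :=
    mul_ne_zero (dotProduct_self_eq_zero.not.mpr he) (dotProduct_self_eq_zero.not.mpr hu)
  have hy : k • y = s • e + c • (e ⨯₃ u) := smul_eq_add_cross_of_dotProduct_eq_zero heu hyu
  have hc : c ≠ 0 := by
    intro hc
    have := congrArg (· ⨯₃ e) hy
    simp [hc, cross_self, hk, hye] at this
  have hd : c * V - s ≠ 0 := by
    intro h
    exact hV (by rw [eq_div_iff hc]; linarith)
  refine ⟨-c / (c * V - s), -k / (c * V - s), div_ne_zero (neg_ne_zero.mpr hc) hd,
    div_ne_zero (neg_ne_zero.mpr hk) hd, ?_⟩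
  rw [show (-k / (c * V - s)) • y = -(c * V - s)⁻¹ • (k • y) by rw [smul_smul]; ring_nf, hy]
  match_scalars
  · field_simp
  · field_simp
    ring

lemma Matrix.exists_ker_eq_span_of_rank_add_one {K m n : Type*} [Field K] [Fintype n]
    {M : Matrix m n K} (h : M.rank + 1 = Fintype.card n) :
    ∃ t ≠ 0, ∀ z, M *ᵥ z = 0 → ∃ μ : K, z = μ • t := by
  have hker : Module.finrank K (LinearMap.ker M.mulVecLin) = 1 := by
    have := LinearMap.finrank_range_add_finrank_ker M.mulVecLin
    rw [Module.finrank_fintype_fun_eq_card] at this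
    exact Nat.add_left_cancel (this.trans h.symm)
  obtain ⟨⟨t, _⟩, ht0, hspan⟩ := (finrank_eq_one_iff' (K := K)).mp hker
  refine ⟨t, fun h => ht0 (Subtype.ext h), fun z hz => ?_⟩
  obtain ⟨μ, hμ⟩ := hspan ⟨z, hz⟩
  exact ⟨μ, (congrArg Subtype.val hμ).symm⟩

lemma exists_forall_dotProduct_ne_zero {K ι : Type*} [Field K] [Infinite K] [Finite ι] {n : ℕ}
    (a : ι → Fin n → K) (ha : ∀ j, a j ≠ 0) : ∃ d, ∀ j, d ⬝ᵥ a j ≠ 0 := by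
  by_contra! h
  obtain ⟨j, hj⟩ := Subspace.exists_eq_top_of_iUnion_eq_univ
    (p := fun j => LinearMap.ker (dotProductBilin K K (a j))) <|
    Set.eq_univ_of_forall fun d => Set.mem_iUnion.2 <| by simpa [dotProduct_comm] using h d
  exact ha j <| dotProduct_eq_zero _ fun d => by
    simpa using (LinearMap.ker_eq_top.mp hj ▸ rfl : dotProductBilin K K (a j) d = 0)

lemma exists_forall_dotProduct_ne {K ι : Type*} [Field K] [Infinite K] [Finite ι] {n : ℕ}
    (a : ι → Fin n → K) (c : ι → K) (ha : ∀ j, a j ≠ 0) : ∃ v, ∀ j, v ⬝ᵥ a j ≠ c j := by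
  obtain ⟨d, hd⟩ := exists_forall_dotProduct_ne_zero a ha
  obtain ⟨τ, hτ⟩ := (Set.finite_range fun j => c j / (d ⬝ᵥ a j)).exists_notMem
  refine ⟨τ • d, fun j hj => hτ ⟨j, ?_⟩⟩
  rw [smul_dotProduct, smul_eq_mul] at hj
  simp [← hj, hd j]

lemma hat_ne_zero {n : ℕ} (u : Fin n → ℝ) : hat u ≠ 0 := fun h => by
  simpa [hat] using congrFun h (Fin.last n)

lemma cam_mulVec_hat (A : Matrix (Fin 3) (Fin 3) ℝ) (b w : Fin 3 → ℝ) :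
    cam A b *ᵥ hat w = A *ᵥ w + b := by
  ext i
  simp only [cam, hat, mulVec, dotProduct, of_apply, Fin.sum_univ_castSucc (n := 3),
    Fin.snoc_castSucc, Fin.snoc_last, mul_one, Pi.add_apply]

lemma skew_mulVec (v w : Fin 3 → ℝ) : skew v *ᵥ w = v ⨯₃ w := by
  ext i
  fin_cases i <;> simp [skew, cross_apply, mulVec, dotProduct, Fin.sum_univ_three] <;> ring

lemma vecMul_skew (v w : Fin 3 → ℝ) : w ᵥ* skew v = w ⨯₃ v := by
  ext i
  fin_cases i <;> simp [skew, cross_apply, vecMul, dotProduct, Fin.sum_univ_three] <;> ring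

lemma ker_mulVecLin_skew {b : Fin 3 → ℝ} (hb : b ≠ 0) :
    LinearMap.ker (skew b).mulVecLin = ℝ ∙ b := by
  ext z
  simp [skew_mulVec, cross_eq_zero_iff hb, Submodule.mem_span_singleton, eq_comm]

lemma rank_skew {b : Fin 3 → ℝ} (hb : b ≠ 0) : (skew b).rank = 2 := by
  have h := LinearMap.finrank_range_add_finrank_ker (skew b).mulVecLin
  rw [ker_mulVecLin_skew hb, finrank_span_singleton hb, Module.finrank_fin_fun] at h
  exact Nat.add_right_cancel h

lemma irregular_iff (A : Matrix (Fin 3) (Fin 3) ℝ) (b : Fin 3 → ℝ) (x y : Fin 2 → ℝ) :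
    Irregular A b x y ↔ ¬(b ⨯₃ (A *ᵥ hat x) = 0 ↔ hat y ⨯₃ b = 0) := by
  rw [Irregular, ← mulVec_mulVec, skew_mulVec, vecMul_skew]
  tauto

lemma not_irregular_skew_mul_iff {F : Matrix (Fin 3) (Fin 3) ℝ} {e : Fin 3 → ℝ}
    {x y : Fin 2 → ℝ} (he : e ≠ 0) (heF : e ⬝ᵥ F *ᵥ hat x = 0) :
    ¬Irregular (skew e * F) e x y ↔ (F *ᵥ hat x = 0 ↔ hat y ⨯₃ e = 0) := by
  rw [irregular_iff, not_not, ← mulVec_mulVec, skew_mulVec,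
    cross_cross_self_eq_zero_iff he heF]

lemma reconstructs_iff {m : ℕ} (A : Matrix (Fin 3) (Fin 3) ℝ) (b : Fin 3 → ℝ)
    (x y : Fin m → Fin 2 → ℝ) :
    (∃ w : Fin m → Fin 3 → ℝ, ∀ i, SimEq (cam 1 0 *ᵥ hat (w i)) (hat (x i)) ∧
        SimEq (cam A b *ᵥ hat (w i)) (hat (y i))) ↔
      ∀ i, ∃ α β : ℝ, α ≠ 0 ∧ β ≠ 0 ∧ α • (A *ᵥ hat (x i)) + b = β • hat (y i) := by
  simp only [SimEq, cam_mulVec_hat, one_mulVec, add_zero]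
  constructor
  · rintro ⟨w, hw⟩ i
    obtain ⟨⟨α, hα, hwx⟩, β, hβ, h⟩ := hw i
    exact ⟨α, β, hα, hβ, by rw [← h, hwx, mulVec_smul]⟩
  · intro h
    choose α β hα hβ h using h
    exact ⟨fun i => α i • hat (x i), fun i =>
      ⟨⟨α i, hα i, rfl⟩, β i, hβ i, by rw [mulVec_smul, h]⟩⟩

lemma epipolar_and_not_irregular_of_depths {A : Matrix (Fin 3) (Fin 3) ℝ} {b : Fin 3 → ℝ}
    {x y : Fin 2 → ℝ} {α β : ℝ} (hb : b ≠ 0) (hα : α ≠ 0) (hβ : β ≠ 0)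
    (h : α • (A *ᵥ hat x) + b = β • hat y) :
    hat y ⬝ᵥ (skew b * A) *ᵥ hat x = 0 ∧ ¬Irregular (skew b * (skew b * A)) b x y := by
  have hcross : α • (b ⨯₃ (A *ᵥ hat x)) = β • (b ⨯₃ hat y) := by
    simpa [cross_self] using congrArg (b ⨯₃ ·) h
  have hFx : (skew b * A) *ᵥ hat x = (β / α) • (b ⨯₃ hat y) := by
    rw [← mulVec_mulVec, skew_mulVec, div_eq_inv_mul, mul_smul, ← hcross, inv_smul_smul₀ hα]
  refine ⟨by rw [hFx, dotProduct_smul, dot_cross_self, smul_zero], ?_⟩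
  rw [not_irregular_skew_mul_iff hb (by rw [hFx, dotProduct_smul, dot_self_cross, smul_zero]),
    hFx, smul_eq_zero_iff_right (div_ne_zero hβ hα), ← cross_anticomm, neg_eq_zero]

lemma exists_depths_of_cross_eq_zero {e y : Fin 3 → ℝ} (V : ℝ) (he : e ≠ 0) (hy : y ≠ 0)
    (hye : y ⨯₃ e = 0) : ∃ α β : ℝ, α ≠ 0 ∧ β ≠ 0 ∧ α • (V • e) + e = β • y := by
  obtain ⟨μ, rfl⟩ := (cross_eq_zero_iff hy).mp hye
  have hμ : μ ≠ 0 := by rintro rfl; simp at he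
  obtain ⟨α, hα, hαV⟩ : ∃ α : ℝ, α ≠ 0 ∧ α * V + 1 ≠ 0 := by
    by_cases hV : V = -1
    · exact ⟨-1, by norm_num, by rw [hV]; norm_num⟩
    · exact ⟨1, one_ne_zero, fun h => hV (by linarith)⟩
  exact ⟨α, (α * V + 1) * μ, hα, mul_ne_zero hαV hμ, by module⟩

lemma skew_mul_add_vecMulVec_mulVec (F : Matrix (Fin 3) (Fin 3) ℝ) (e v z : Fin 3 → ℝ) :
    (skew e * F + vecMulVec e v) *ᵥ z = e ⨯₃ (F *ᵥ z) + (v ⬝ᵥ z) • e := by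
  rw [add_mulVec, ← mulVec_mulVec, skew_mulVec, vecMulVec_mulVec, op_smul_eq_smul]

lemma isUnit_det_skew_mul_add_vecMulVec {F : Matrix (Fin 3) (Fin 3) ℝ} {e v t : Fin 3 → ℝ}
    (he : e ≠ 0) (heF : ∀ z, e ⬝ᵥ F *ᵥ z = 0) (hker : ∀ z, F *ᵥ z = 0 → ∃ μ : ℝ, z = μ • t)
    (hvt : v ⬝ᵥ t ≠ 0) : IsUnit (skew e * F + vecMulVec e v).det := by
  rw [isUnit_iff_ne_zero, Ne, ← exists_mulVec_eq_zero_iff]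
  rintro ⟨z, hz0, hz⟩
  rw [skew_mul_add_vecMulVec_mulVec] at hz
  have hee : e ⬝ᵥ e ≠ 0 := dotProduct_self_eq_zero.not.mpr he
  have hvz : v ⬝ᵥ z = 0 := by simpa [dot_self_cross, hee] using congrArg (e ⬝ᵥ ·) hz
  rw [hvz, zero_smul, add_zero, cross_eq_zero_iff he] at hz
  obtain ⟨μ, hμ⟩ := hz
  have hFz : F *ᵥ z = 0 := by
    have hμ0 := heF z
    rw [hμ, dotProduct_smul, smul_eq_mul, mul_eq_zero] at hμ0
    rw [hμ, hμ0.resolve_right hee, zero_smul]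
  obtain ⟨ν, rfl⟩ := hker z hFz
  rw [dotProduct_smul, smul_eq_mul, mul_eq_zero] at hvz
  exact hz0 (by rw [hvz.resolve_right hvt, zero_smul])

lemma exists_depths_of_not_irregular {F : Matrix (Fin 3) (Fin 3) ℝ} {e v : Fin 3 → ℝ}
    {x y : Fin 2 → ℝ} (he : e ≠ 0) (heF : e ⬝ᵥ F *ᵥ hat x = 0)
    (hepi : hat y ⬝ᵥ F *ᵥ hat x = 0) (hreg : ¬Irregular (skew e * F) e x y)
    (hv : v ⬝ᵥ hat x ≠
      (hat y ⬝ᵥ e) * (F *ᵥ hat x ⬝ᵥ F *ᵥ hat x) / (hat y ⬝ᵥ e ⨯₃ (F *ᵥ hat x))) :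
    ∃ α β : ℝ, α ≠ 0 ∧ β ≠ 0 ∧
      α • ((skew e * F + vecMulVec e v) *ᵥ hat x) + e = β • hat y := by
  rw [not_irregular_skew_mul_iff he heF] at hreg
  rw [skew_mul_add_vecMulVec_mulVec]
  by_cases hu : F *ᵥ hat x = 0
  · rw [hu, map_zero, zero_add]
    exact exists_depths_of_cross_eq_zero _ he (hat_ne_zero y) (hreg.mp hu)
  · exact exists_depths_of_cross_ne_zero he hu heF hepi (hreg.not.mp hu) hv

/-- Main theorem: a finite reconstruction with non-coincident cameras, the first being
`(I 0)`, exists iff there is a fundamental matrix `F` with nonzero `e₂ ∈ ker Fᵀ` such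
that all point pairs are `([e₂]ₓ F, e₂)`-regular. -/
theorem stmt14 (m : ℕ) (x y : Fin m → Fin 2 → ℝ) :
    (∃ (A : Matrix (Fin 3) (Fin 3) ℝ) (b : Fin 3 → ℝ), IsUnit A.det ∧ b ≠ 0 ∧
      ∃ w : Fin m → Fin 3 → ℝ, ∀ i,
        SimEq ((cam 1 0).mulVec (hat (w i))) (hat (x i)) ∧
        SimEq ((cam A b).mulVec (hat (w i))) (hat (y i))) ↔
    (∃ (F : Matrix (Fin 3) (Fin 3) ℝ) (e₂ : Fin 3 → ℝ), F.rank = 2 ∧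
      (∀ i, hat (y i) ⬝ᵥ F.mulVec (hat (x i)) = 0) ∧
      e₂ ≠ 0 ∧ Fᵀ.mulVec e₂ = 0 ∧
      (∀ i, ¬ Irregular (skew e₂ * F) e₂ (x i) (y i))) := by
  simp only [reconstructs_iff]
  constructor
  · rintro ⟨A, b, hA, hb, hdepths⟩
    choose α β hα hβ h using hdepths
    have hpair i := epipolar_and_not_irregular_of_depths hb (hα i) (hβ i) (h i)
    refine ⟨skew b * A, b, by rw [rank_mul_eq_left_of_isUnit_det A _ hA, rank_skew hb],
      fun i => (hpair i).1, hb, ?_, fun i => (hpair i).2⟩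
    rw [mulVec_transpose, ← vecMul_vecMul, vecMul_skew, cross_self, zero_vecMul]
  · rintro ⟨F, e, hF, hepi, he, hFe, hreg⟩
    have heF z : e ⬝ᵥ F *ᵥ z = 0 := by
      rw [dotProduct_mulVec, ← mulVec_transpose, hFe, zero_dotProduct]
    obtain ⟨t, ht, hker⟩ := exists_ker_eq_span_of_rank_add_one (by rw [hF]; rfl : F.rank + 1 = _)
    -- `v` must not be orthogonal to `ker F`, and `v ⬝ᵥ x̂ᵢ` must avoid the one value for which
    -- the depths of the `i`-th point cannot be solved for.
    obtain ⟨v, hv⟩ := exists_forall_dotProduct_ne (Option.elim · t fun i => hat (x i))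
      (Option.elim · 0 fun i => (hat (y i) ⬝ᵥ e) * (F *ᵥ hat (x i) ⬝ᵥ F *ᵥ hat (x i)) /
        (hat (y i) ⬝ᵥ e ⨯₃ (F *ᵥ hat (x i))))
      (by rintro (_ | i); exacts [ht, hat_ne_zero _])
    exact ⟨_, e, isUnit_det_skew_mul_add_vecMulVec he heF hker (hv none), he, fun i =>
      exists_depths_of_not_irregular he (heF _) (hepi i) (hreg i) (hv (some i))⟩
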